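/- Let T be an ABC-tile with 1 ≤ A < B < C, B < 2A − 1, and C < A + B − 2. Then the three lattice points t₁ = (A+B−2, A+1, 1), t₂ = (B−2A+1, A−2, 1), and t₃ = (−2B+A+1, 1−2A, −2) are all neighbors of T, i.e. T ∩ (T + tᵢ) ≠ ∅ for i = 1, 2, 3. -/

import Mathlib

open MeasureTheory

noncomputable def Mmat (A B C : ℤ) : Matrix (Fin 3) (Fin 3) ℝ :=
  !![0, 0, -(C : ℝ); 1, 0, -(B : ℝ); 0, 1, -(A : ℝ)]

def Ddig (C : ℤ) : Set (Fin 3 → ℝ) :=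
  {d | ∃ i : ℤ, 0 ≤ i ∧ i < C ∧ d = ![(i : ℝ), 0, 0]}

def toR (α : Fin 3 → ℤ) : Fin 3 → ℝ := fun i => (α i : ℝ)

def tileTranslate (v : Fin 3 → ℝ) (T : Set (Fin 3 → ℝ)) : Set (Fin 3 → ℝ) :=
  (fun x => x + v) '' T

def IsABCTile (A B C : ℤ) (T : Set (Fin 3 → ℝ)) : Prop :=
  1 ≤ A ∧ A ≤ B ∧ B < C ∧
  T.Nonempty ∧ IsCompact T ∧ 0 < volume T ∧
  (Mmat A B C).mulVec '' T = ⋃ d ∈ Ddig C, tileTranslate d T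

def Neighbors (T : Set (Fin 3 → ℝ)) : Set (Fin 3 → ℤ) :=
  {α | α ≠ 0 ∧ (T ∩ tileTranslate (toR α) T).Nonempty}

/-!
If `v ∈ T - T` and `|k| < C`, the set equation yields `u ∈ T - T` with `M u = v + k e₁`.
Following a closed walk `t → ⋯ → t` of such steps round and round, starting from `0 ∈ T - T`,
the error `u - t` is multiplied by a fixed power of `M⁻¹` each time. This power tends to `0`,
since every root of `C z³ + B z² + A z + 1` lies in the open unit disc (Gelfand's formula), so
`t` lies in the compact set `T - T`. The three points form the closed walk `t₁ → t₃ → t₂ → t₁`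
with digits `2C - A - B + 2`, `2B - A - C - 1` and `2A - B - C - 1`; the hypotheses on `A, B, C`
are what keep these digits in `(-C, C)`.
-/

open Filter Topology Pointwise Matrix

theorem tendsto_pow_atTop_nhds_zero_of_spectralRadius_lt_one {A : Type*} [NormedRing A]
    [NormedAlgebra ℂ A] [CompleteSpace A] {a : A} (ha : spectralRadius ℂ a < 1) :
    Tendsto (fun n : ℕ => a ^ n) atTop (𝓝 0) := by
  obtain ⟨r, hρr, hr1⟩ := exists_between ha
  lift r to NNReal using ne_top_of_lt hr1
  have hroot : ∀ᶠ n : ℕ in atTop, (‖a ^ n‖₊ : ENNReal) ^ (1 / (n : ℝ)) < r :=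
    (spectrum.pow_nnnorm_pow_one_div_tendsto_nhds_spectralRadius a).eventually_lt_const hρr
  have hbound : ∀ᶠ n : ℕ in atTop, ‖a ^ n‖ ≤ (r : ℝ) ^ n := by
    filter_upwards [hroot, eventually_gt_atTop 0] with n hn hn0
    rw [one_div, ENNReal.rpow_inv_lt_iff (by positivity), ENNReal.rpow_natCast,
      ← ENNReal.coe_pow, ENNReal.coe_lt_coe] at hn
    exact_mod_cast hn.le
  exact squeeze_zero_norm' hbound
    (tendsto_pow_atTop_nhds_zero_of_lt_one r.coe_nonneg (by exact_mod_cast hr1))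

theorem norm_lt_one_of_cubic_eq_zero {a b c : ℝ} (ha : 1 ≤ a) (hab : a < b) (hbc : b < c)
    {z : ℂ} (hz : c * z ^ 3 + b * z ^ 2 + a * z + 1 = 0) : ‖z‖ < 1 := by
  by_contra! hz1
  have hz0 : z ≠ 0 := norm_pos_iff.mp (one_pos.trans_le hz1)
  -- Multiplying by `z - 1` makes all coefficients but the leading one nonnegative.
  have h4 : c * z ^ 4 = (c - b : ℝ) * z ^ 3 + (b - a : ℝ) * z ^ 2 + (a - 1 : ℝ) * z + 1 := by
    push_cast; linear_combination (z - 1) * hz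
  have hnorm : c * ‖z‖ ^ 4 ≤ (c - b) * ‖z‖ ^ 3 + (b - a) * ‖z‖ ^ 2 + (a - 1) * ‖z‖ + 1 := by
    have h := congrArg norm h4
    simp only [norm_mul, norm_pow, Complex.norm_real, Real.norm_eq_abs] at h
    calc c * ‖z‖ ^ 4 = |c| * ‖z‖ ^ 4 := by rw [abs_of_pos (by linarith)]
      _ = _ := h
      _ ≤ _ := norm_add₄_le.trans_eq (by
          simp only [norm_mul, norm_pow, Complex.norm_real, Real.norm_eq_abs, norm_one]
          rw [abs_of_nonneg (by linarith), abs_of_nonneg (by linarith),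
            abs_of_nonneg (by linarith)])
  have hz_eq : ‖z‖ = 1 := by
    refine (hz1.eq_or_lt.resolve_right fun hgt => ?_).symm
    have h2 : ‖z‖ ^ 2 < ‖z‖ ^ 3 := pow_lt_pow_right₀ hgt (by norm_num)
    have h1 : ‖z‖ ≤ ‖z‖ ^ 3 := le_self_pow₀ hz1 (by norm_num)
    have h0 : 1 ≤ ‖z‖ ^ 3 := one_le_pow₀ hz1
    have h3 : ‖z‖ ^ 3 ≤ ‖z‖ ^ 4 := pow_le_pow_right₀ hz1 (by norm_num)
    nlinarith [mul_lt_mul_of_pos_left h2 (sub_pos.2 hab)]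
  -- On the unit circle `c` becomes a combination of powers of `w = z⁻¹` with nonnegative
  -- weights summing to `c`, so every power with positive weight has real part `1`.
  set w := z⁻¹
  have hw : ∀ n : ℕ, (w ^ n).re ≤ 1 := fun n =>
    (Complex.re_le_norm _).trans (by simp [w, hz_eq])
  have hc : c = (c - b : ℝ) * w + (b - a : ℝ) * w ^ 2 + (a - 1 : ℝ) * w ^ 3 + w ^ 4 := by
    simp only [w]
    field_simp
    linear_combination h4
  have hw2 : w ^ 2 = 1 := by
    have hre := congrArg Complex.re hc
    simp only [Complex.add_re, Complex.re_ofReal_mul, Complex.ofReal_re] at hre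
    have hw1 : w.re ≤ 1 := by simpa using hw 1
    have hre2 : (w ^ 2).re = 1 := by
      nlinarith [mul_nonneg (sub_nonneg.2 hbc.le) (sub_nonneg.2 hw1),
        mul_nonneg (sub_nonneg.2 ha) (sub_nonneg.2 (hw 3)), hw 2, hw 4]
    have him2 : (w ^ 2).im = 0 := by
      rw [← Complex.abs_re_eq_norm, hre2]; simp [w, hz_eq]
    exact Complex.ext (by simpa using hre2) (by simpa using him2)
  have hz2 : z ^ 2 = 1 := by simpa [w, inv_pow] using hw2
  rcases sq_eq_one_iff.mp hz2 with rfl | rfl <;>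
  · have hre := congrArg Complex.re hz
    norm_num at hre
    linarith

theorem Matrix.mem_of_isClosed_of_tendsto_pow {ι R : Type*} [Fintype ι] [DecidableEq ι] [Ring R]
    [TopologicalSpace R] [IsTopologicalRing R] {S : Set (ι → R)} (hS : IsClosed S)
    {L : Matrix ι ι R} (hL : Tendsto (fun n : ℕ => L ^ n) atTop (𝓝 0)) {s t : ι → R}
    (hs : s ∈ S) (hstep : ∀ v ∈ S, ∃ u ∈ S, u - t = L *ᵥ (v - t)) : t ∈ S := by
  have hiter : ∀ n : ℕ, ∃ u ∈ S, u - t = (L ^ n) *ᵥ (s - t) := by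
    intro n
    induction n with
    | zero => exact ⟨s, hs, by simp⟩
    | succ n ih =>
      obtain ⟨u, hu, hut⟩ := ih
      obtain ⟨u', hu', hu't⟩ := hstep u hu
      exact ⟨u', hu', by rw [hu't, hut, mulVec_mulVec, ← pow_succ']⟩
  choose u hu hut using hiter
  have hlim : Tendsto u atTop (𝓝 t) := by
    have h := ((continuous_id.matrix_mulVec (continuous_const (y := s - t))).tendsto 0).comp hL
    simpa [Function.comp_def, ← hut] using h.const_add t
  exact hS.closure_subset (mem_closure_of_tendsto hlim (Eventually.of_forall hu))

noncomputable def MmatInv (A B C : ℤ) : Matrix (Fin 3) (Fin 3) ℝ :=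
  !![-((B : ℝ) / C), 1, 0; -((A : ℝ) / C), 0, 1; -(1 / (C : ℝ)), 0, 0]

theorem MmatInv_mul_Mmat {A B C : ℤ} (hC : C ≠ 0) : MmatInv A B C * Mmat A B C = 1 := by
  have hC' : (C : ℝ) ≠ 0 := by exact_mod_cast hC
  ext i j
  fin_cases i <;> fin_cases j <;>
    simp [MmatInv, Mmat, Matrix.mul_apply, Fin.sum_univ_three] <;>
    field_simp <;> ring

theorem cubic_eq_zero_of_mem_spectrum_MmatInv {A B C : ℤ} (hC : C ≠ 0) {z : ℂ}
    (hz : z ∈ spectrum ℂ ((MmatInv A B C).map Complex.ofRealHom)) :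
    (C : ℝ) * z ^ 3 + (B : ℝ) * z ^ 2 + (A : ℝ) * z + 1 = 0 := by
  have hC' : (C : ℂ) ≠ 0 := by exact_mod_cast hC
  rw [spectrum.mem_iff, Matrix.isUnit_iff_isUnit_det, isUnit_iff_ne_zero, not_not,
    Matrix.algebraMap_eq_diagonal, Matrix.det_fin_three] at hz
  simp [MmatInv] at hz
  field_simp at hz
  linear_combination hz

section LinftyOpNorm

attribute [local instance] Matrix.linftyOpNormedRing Matrix.linftyOpNormedAlgebra

theorem Matrix.tendsto_pow_atTop_nhds_zero_of_spectralRadius_lt_one {ι : Type*} [Fintype ι]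
    [DecidableEq ι] {N : Matrix ι ι ℝ}
    (hN : spectralRadius ℂ (N.map Complex.ofRealHom) < 1) :
    Tendsto (fun n : ℕ => N ^ n) atTop (𝓝 0) := by
  have hmap := ((continuous_id.matrix_map Complex.continuous_re).tendsto 0).comp
    (_root_.tendsto_pow_atTop_nhds_zero_of_spectralRadius_lt_one hN)
  convert hmap using 2 with n
  · ext i j
    simp [← Matrix.map_pow]
  · ext i j
    simp

theorem spectralRadius_MmatInv_lt_one {A B C : ℤ} (hA : 1 ≤ A) (hAB : A < B) (hBC : B < C) :
    spectralRadius ℂ ((MmatInv A B C).map Complex.ofRealHom) < 1 := by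
  have hC : C ≠ 0 := by omega
  simpa using spectrum.spectralRadius_lt_of_forall_lt (r := 1) _ fun z hz => by
    simpa [← NNReal.coe_lt_coe] using norm_lt_one_of_cubic_eq_zero (by exact_mod_cast hA)
      (by exact_mod_cast hAB) (by exact_mod_cast hBC)
      (cubic_eq_zero_of_mem_spectrum_MmatInv hC hz)

end LinftyOpNorm

theorem inter_tileTranslate_nonempty_iff {T : Set (Fin 3 → ℝ)} {v : Fin 3 → ℝ} :
    (T ∩ tileTranslate v T).Nonempty ↔ v ∈ T - T := by
  simp only [Set.Nonempty, tileTranslate, Set.mem_inter_iff, Set.mem_image, Set.mem_sub]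
  constructor
  · rintro ⟨x, hx, y, hy, rfl⟩
    exact ⟨y + v, hx, y, hy, add_sub_cancel_left y v⟩
  · rintro ⟨x, hx, y, hy, rfl⟩
    exact ⟨x, hx, y, hy, add_sub_cancel y x⟩

-- `k` ranges over the differences `d - d'` of two digits.
def DigitStep (A B C : ℤ) (v w : Fin 3 → ℝ) : Prop :=
  ∃ k : ℤ, |k| < C ∧ Mmat A B C *ᵥ w = v + ![(k : ℝ), 0, 0]

theorem digitStep_toR {A B C a₀ a₁ a₂ b₀ b₁ b₂ : ℤ} (hk : |C * b₂ + a₀| < C)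
    (h₁ : b₀ - B * b₂ = a₁) (h₂ : b₁ - A * b₂ = a₂) :
    DigitStep A B C (toR ![a₀, a₁, a₂]) (toR ![b₀, b₁, b₂]) := by
  refine ⟨-(C * b₂ + a₀), by rwa [abs_neg], ?_⟩
  ext i
  fin_cases i <;> simp [Mmat, toR, mulVec, dotProduct, Fin.sum_univ_three, ← h₁, ← h₂] <;> ring

namespace IsABCTile

variable {A B C : ℤ} {T : Set (Fin 3 → ℝ)}

theorem exists_mulVec_eq_add (hT : IsABCTile A B C T) {x : Fin 3 → ℝ} (hx : x ∈ T) {k : ℤ}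
    (hk0 : 0 ≤ k) (hkC : k < C) : ∃ x' ∈ T, Mmat A B C *ᵥ x' = x + ![(k : ℝ), 0, 0] := by
  have ⟨_, _, _, _, _, _, hset⟩ := hT
  rw [← Set.mem_image, hset]
  exact Set.mem_biUnion ⟨k, hk0, hkC, rfl⟩ ⟨x, hx, rfl⟩

theorem exists_sub_mem_mulVec_eq_add (hT : IsABCTile A B C T) {v : Fin 3 → ℝ} (hv : v ∈ T - T)
    {k : ℤ} (hk : |k| < C) : ∃ u ∈ T - T, Mmat A B C *ᵥ u = v + ![(k : ℝ), 0, 0] := by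
  obtain ⟨x, hx, y, hy, rfl⟩ := hv
  obtain ⟨hk₁, hk₂⟩ := abs_lt.mp hk
  obtain ⟨x', hx', hxx'⟩ := hT.exists_mulVec_eq_add hx (le_max_right k 0) (by omega)
  obtain ⟨y', hy', hyy'⟩ := hT.exists_mulVec_eq_add hy (le_max_right (-k) 0) (by omega)
  refine ⟨x' - y', Set.sub_mem_sub hx' hy', ?_⟩
  have hdigit : ![((max k 0 : ℤ) : ℝ), 0, 0] - ![((max (-k) 0 : ℤ) : ℝ), 0, 0]
      = ![(k : ℝ), 0, 0] := by
    rw [← (by exact_mod_cast (by omega : max k 0 - max (-k) 0 = k) :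
      ((max k 0 : ℤ) : ℝ) - ((max (-k) 0 : ℤ) : ℝ) = k)]
    ext i; fin_cases i <;> simp
  rw [mulVec_sub, hxx', hyy', add_sub_add_comm, hdigit]

theorem exists_sub_mem_of_digitStep (hT : IsABCTile A B C T) {v w : Fin 3 → ℝ}
    (hvw : DigitStep A B C v w) {v' : Fin 3 → ℝ} (hv' : v' ∈ T - T) :
    ∃ u ∈ T - T, u - w = MmatInv A B C *ᵥ (v' - v) := by
  obtain ⟨k, hk, hw⟩ := hvw
  obtain ⟨u, hu, hMu⟩ := hT.exists_sub_mem_mulVec_eq_add hv' hk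
  have hC : C ≠ 0 := by have ⟨_, _, _, _⟩ := hT; omega
  have hM : Mmat A B C *ᵥ (u - w) = v' - v := by rw [mulVec_sub, hMu, hw]; abel
  refine ⟨u, hu, ?_⟩
  rw [← hM, mulVec_mulVec, MmatInv_mul_Mmat hC, one_mulVec]

theorem exists_sub_mem_of_transGen (hT : IsABCTile A B C T) {v w : Fin 3 → ℝ}
    (hvw : Relation.TransGen (DigitStep A B C) v w) :
    ∃ m, 0 < m ∧ ∀ v' ∈ T - T, ∃ u ∈ T - T, u - w = (MmatInv A B C ^ m) *ᵥ (v' - v) := by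
  induction hvw with
  | single h =>
    exact ⟨1, one_pos, fun v' hv' => by simpa using hT.exists_sub_mem_of_digitStep h hv'⟩
  | tail _ h ih =>
    obtain ⟨m, hm, hstep⟩ := ih
    refine ⟨m + 1, m.succ_pos, fun v' hv' => ?_⟩
    obtain ⟨u, hu, huw⟩ := hstep v' hv'
    obtain ⟨u', hu', hu'w⟩ := hT.exists_sub_mem_of_digitStep h hu
    exact ⟨u', hu', by rw [hu'w, huw, mulVec_mulVec, ← pow_succ']⟩

theorem mem_sub_of_transGen_self (hT : IsABCTile A B C T) (hAB : A < B) {t : Fin 3 → ℝ}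
    (ht : Relation.TransGen (DigitStep A B C) t t) : t ∈ T - T := by
  have ⟨hA, _, hBC, ⟨x, hx⟩, hcompact, _⟩ := hT
  obtain ⟨m, hm, hstep⟩ := hT.exists_sub_mem_of_transGen ht
  have hcontract : Tendsto (fun n : ℕ => (MmatInv A B C ^ m) ^ n) atTop (𝓝 0) := by
    simp_rw [← pow_mul]
    exact (Matrix.tendsto_pow_atTop_nhds_zero_of_spectralRadius_lt_one
      (spectralRadius_MmatInv_lt_one hA hAB hBC)).comp
      (tendsto_id.const_mul_atTop' hm)
  have hclosed : IsClosed (T - T) := by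
    rw [sub_eq_add_neg]
    exact (hcompact.add hcompact.neg).isClosed
  exact Matrix.mem_of_isClosed_of_tendsto_pow hclosed hcontract (Set.sub_mem_sub hx hx) hstep

end IsABCTile

theorem stmt11 (A B C : ℤ) (T : Set (Fin 3 → ℝ)) (hT : IsABCTile A B C T)
    (hAB : A < B) (hB : B < 2 * A - 1) (hC : C < A + B - 2) :
    (T ∩ tileTranslate (toR ![A + B - 2, A + 1, 1]) T).Nonempty ∧
    (T ∩ tileTranslate (toR ![B - 2 * A + 1, A - 2, 1]) T).Nonempty ∧
    (T ∩ tileTranslate (toR ![-2 * B + A + 1, 1 - 2 * A, -2]) T).Nonempty := by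
  have ⟨hA, _, hBC, _⟩ := hT
  have h₁₃ : DigitStep A B C (toR ![A + B - 2, A + 1, 1])
      (toR ![-2 * B + A + 1, 1 - 2 * A, -2]) :=
    digitStep_toR (abs_lt.2 ⟨by omega, by omega⟩) (by ring) (by ring)
  have h₃₂ : DigitStep A B C (toR ![-2 * B + A + 1, 1 - 2 * A, -2])
      (toR ![B - 2 * A + 1, A - 2, 1]) :=
    digitStep_toR (abs_lt.2 ⟨by omega, by omega⟩) (by ring) (by ring)
  have h₂₁ : DigitStep A B C (toR ![B - 2 * A + 1, A - 2, 1]) (toR ![A + B - 2, A + 1, 1]) :=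
    digitStep_toR (abs_lt.2 ⟨by omega, by omega⟩) (by ring) (by ring)
  simp only [inter_tileTranslate_nonempty_iff]
  exact ⟨hT.mem_sub_of_transGen_self hAB (.tail (.tail (.single h₁₃) h₃₂) h₂₁),
    hT.mem_sub_of_transGen_self hAB (.tail (.tail (.single h₂₁) h₁₃) h₃₂),
    hT.mem_sub_of_transGen_self hAB (.tail (.tail (.single h₃₂) h₂₁) h₁₃)⟩
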